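/- arXiv:1901.08386 — 2 statements merged into one kernel-verified Lean document; each statement's English description precedes it below -/
import Mathlib

section
/- Let n, m, k be natural numbers with 1 ≤ k ≤ m ≤ n. Then binom(n - (m - k + 1), k - 1) · binom(n - m, m - k + 1) ≥ binom(n - (m + k - 1), m) · binom(m, m - k + 1) whenever n ≥ 2m. -/
/-- Enlarging `a - j` to `a` and splitting an `m`-set with a marked `j`-subset the other way round
(`Nat.choose_mul`) leaves only monotonicity of binomial coefficients. -/
theorem Nat.choose_sub_mul_choose_le_choose_add_mul_choose {a m j : ℕ} (hjm : j ≤ m) :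
    (a - j).choose m * m.choose j ≤ (a + j).choose j * a.choose (m - j) :=
  calc (a - j).choose m * m.choose j
      ≤ a.choose m * m.choose j := by gcongr; exact Nat.sub_le a j
    _ = a.choose j * (a - j).choose (m - j) := Nat.choose_mul hjm
    _ ≤ (a + j).choose j * a.choose (m - j) := by gcongr <;> omega

theorem stmt_17_general (n m k : ℕ) (hk1 : 1 ≤ k) (hkm : k ≤ m) (hmn : m ≤ n) :
    Nat.choose (n - (m - k + 1)) (k - 1) * Nat.choose (n - m) (m - k + 1)
      ≥ Nat.choose (n - (m + k - 1)) m * Nat.choose m (m - k + 1) := by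
  have hjm : k - 1 ≤ m := by omega
  have h_left : n - (m - k + 1) = (n - m) + (k - 1) := by omega
  have h_right : n - (m + k - 1) = (n - m) - (k - 1) := by omega
  have h_lower : m - k + 1 = m - (k - 1) := by omega
  rw [h_left, h_right, h_lower, Nat.choose_symm hjm]
  exact Nat.choose_sub_mul_choose_le_choose_add_mul_choose hjm

theorem stmt_17 (n m k : ℕ) (hk1 : 1 ≤ k) (hkm : k ≤ m) (hmn : m ≤ n) (hn : 2 * m ≤ n) :
    Nat.choose (n - (m - k + 1)) (k - 1) * Nat.choose (n - m) (m - k + 1)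
      ≥ Nat.choose (n - (m + k - 1)) m * Nat.choose m (m - k + 1) :=
  stmt_17_general n m k hk1 hkm hmn
end

section
/- For every real x with 0 < x ≤ 1/√32, log((1/2 + 2x)/(1/2 - 2x)) < 16x. -/
open Real

lemma log_one_add_div_one_sub_lt {t : ℝ} (ht : 0 < t) (ht2 : 2 * t ^ 2 ≤ 1) :
    log ((1 + t) / (1 - t)) < 4 * t := by
  have hsub : 0 < 1 - t := by nlinarith
  -- (1 + 2t)²(1 - t) - (1 + t) = 2t(1 - 2t²)
  have hquot : (1 + t) / (1 - t) ≤ (1 + 2 * t) ^ 2 := by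
    rw [div_le_iff₀ hsub]
    nlinarith
  have hexp : (1 + 2 * t) ^ 2 < exp (4 * t) := by
    rw [show 4 * t = 2 * t + 2 * t by ring, exp_add, sq, add_comm]
    exact mul_self_lt_mul_self (by positivity) (add_one_lt_exp (by positivity))
  rw [log_lt_iff_lt_exp (by positivity)]
  exact hquot.trans_lt hexp

theorem stmt_18 (x : ℝ) (hx0 : 0 < x) (hx : x ≤ 1 / Real.sqrt 32) :
    Real.log ((1/2 + 2*x) / (1/2 - 2*x)) < 16 * x := by
  have hsq : x ^ 2 ≤ 1 / 32 := by
    rwa [one_div, ← sqrt_inv, le_sqrt hx0.le (by norm_num), ← one_div] at hx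
  have hquot : (1/2 + 2*x) / (1/2 - 2*x) = (1 + 4 * x) / (1 - 4 * x) := by
    rw [← mul_div_mul_left _ _ (two_ne_zero' ℝ)]
    ring_nf
  rw [hquot, show 16 * x = 4 * (4 * x) by ring]
  exact log_one_add_div_one_sub_lt (by positivity) (by nlinarith)
end
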